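/- Let o be an operator in TNF and φ a potential heuristic over features of size at most 2. Then max over states s in which o is applicable of (φ(s) − φ(s⟦o⟧)) equals Δ_o^{ind} + Σ_{V ∉ vars(o)} max_{v ∈ dom(V)} Σ_{f = f_o ∧ (V,v)} w(f)·Δ_o(f_o), where Δ_o^{ind} = Σ_{f : vars(f) ⊆ vars(o)} w(f)·([pre(o) ⊨ f] − [eff(o) ⊨ f]) and Δ_o(f_o) = [pre(o) ⊨ f_o] − [eff(o) ⊨ f_o], the inner sum ranging over context-dependent features consisting of a fact f_o on a variable of vars(o) and the fact (V,v). In particular the maximum is attained and is independent of features not mentioning vars(o). -/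

import Mathlib

/-!
For `s` with `o` applicable, `s ⊨ f` iff `s` satisfies the part of `f` outside `vars(o)` and
`pre(o) ⊨ f|_{vars(o)}`; likewise `s⟦o⟧ ⊨ f` iff the same outside condition holds (`s⟦o⟧`
agrees with `s` there) and `eff(o) ⊨ f|_{vars(o)}`. So every feature contributes
`w(f)·Δ_o(f|_{vars(o)})` exactly when `s` satisfies its outside part: always for
context-independent features, with `Δ_o = 0` for irrelevant ones, and, since features have size
at most 2, exactly when `s(V) = v` for a context-dependent `f = f_o ∧ (V,v)`. Hence
`φ(s) − φ(s⟦o⟧) = Δ_o^{ind} + Σ_V innerSum V (s V)`, and the values of `s` outside `vars(o)`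
can be chosen independently to maximize each summand.
-/

attribute [local instance] Classical.propDecidable

abbrev PState (V : Type) (D : V → Type) := ∀ v, D v
abbrev PAssign (V : Type) (D : V → Type) := ∀ v, Option (D v)

def Models {V : Type} {D : V → Type} (s : PState V D) (f : PAssign V D) : Prop :=
  ∀ v, ∀ x ∈ f v, s v = x

def PModels {V : Type} {D : V → Type} (p f : PAssign V D) : Prop :=
  ∀ v, ∀ x ∈ f v, p v = some x

structure Op (V : Type) (D : V → Type) where
  pre : PAssign V D
  eff : PAssign V D
  cost : ℝ
  tnf : ∀ v, (pre v).isSome ↔ (eff v).isSome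
  cost_nonneg : 0 ≤ cost

def Op.applicable {V : Type} {D : V → Type} (o : Op V D) (s : PState V D) : Prop :=
  Models s o.pre

def Op.res {V : Type} {D : V → Type} (o : Op V D) (s : PState V D) : PState V D :=
  fun v => (o.eff v).getD (s v)

/-- The potential heuristic for features `F` and weights `w`. -/
noncomputable def pot {V : Type} {D : V → Type} [Fintype V]
    (F : Finset (PAssign V D)) (w : PAssign V D → ℝ) (s : PState V D) : ℝ :=
  ∑ f ∈ F, if Models s f then w f else 0

/-- Restriction of a feature to the variables of `o`. -/
noncomputable def restrictO {V : Type} {D : V → Type} (o : Op V D) (f : PAssign V D) :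
    PAssign V D :=
  fun v => if (o.pre v).isSome then f v else none

/-- `Δ_o^{ind}`: state-independent contribution of the context-independent features. -/
noncomputable def deltaInd {V : Type} {D : V → Type} [Fintype V]
    (o : Op V D) (F : Finset (PAssign V D)) (w : PAssign V D → ℝ) : ℝ :=
  ∑ f ∈ F.filter (fun f => ∀ v, (f v).isSome → (o.pre v).isSome),
    w f * ((if PModels o.pre f then (1 : ℝ) else 0) - (if PModels o.eff f then (1 : ℝ) else 0))

/-- Inner sum of `w(f)·Δ_o(f_o)` over the context-dependent features `f = f_o ∧ (u,x)`. -/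
noncomputable def innerSum {V : Type} {D : V → Type} [Fintype V]
    (o : Op V D) (F : Finset (PAssign V D)) (w : PAssign V D → ℝ)
    (u : V) (x : D u) : ℝ :=
  ∑ f ∈ F.filter (fun f => f u = some x ∧ ∃ v, (o.pre v).isSome ∧ (f v).isSome),
    w f * ((if PModels o.pre (restrictO o f) then (1 : ℝ) else 0) -
           (if PModels o.eff (restrictO o f) then (1 : ℝ) else 0))

namespace Op

variable {V : Type} {D : V → Type} (o : Op V D)

noncomputable def delta (f : PAssign V D) : ℝ :=
  (if PModels o.pre f then 1 else 0) - (if PModels o.eff f then 1 else 0)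

def ModelsOutside (s : PState V D) (f : PAssign V D) : Prop :=
  ∀ v, ¬ (o.pre v).isSome → ∀ x ∈ f v, s v = x

variable {o}

lemma res_apply_of_not_isSome_pre (s : PState V D) {v : V} (h : ¬ (o.pre v).isSome) :
    o.res s v = s v := by
  have : o.eff v = none := Option.not_isSome_iff_eq_none.mp (mt (o.tnf v).mpr h)
  simp [Op.res, this]

lemma modelsOutside_res_iff (s : PState V D) (f : PAssign V D) :
    o.ModelsOutside (o.res s) f ↔ o.ModelsOutside s f := by
  refine forall_congr' fun v => imp_congr_right fun hv => ?_
  rw [res_apply_of_not_isSome_pre s hv]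

lemma models_iff_modelsOutside_and_pModels {t : PState V D} {p : PAssign V D}
    (hp : ∀ v, (o.pre v).isSome → p v = some (t v)) (f : PAssign V D) :
    Models t f ↔ o.ModelsOutside t f ∧ PModels p (restrictO o f) := by
  unfold Models ModelsOutside PModels restrictO
  refine ⟨fun h => ⟨fun v _ => h v, fun v x hx => ?_⟩, fun ⟨hout, hin⟩ v x hx => ?_⟩
  · by_cases hv : (o.pre v).isSome
    · rw [if_pos hv] at hx
      rw [hp v hv, h v x hx]
    · simp [hv] at hx
  · by_cases hv : (o.pre v).isSome
    · simpa [hp v hv] using hin v x (by simpa [hv] using hx)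
    · exact hout v hv x hx

lemma applicable.pre_eq {s : PState V D} (hs : o.applicable s) {v : V}
    (hv : (o.pre v).isSome) : o.pre v = some (s v) := by
  obtain ⟨x, hx⟩ := Option.isSome_iff_exists.mp hv
  rw [hx, hs v x hx]

lemma eff_eq_res_apply (s : PState V D) {v : V} (hv : (o.pre v).isSome) :
    o.eff v = some (o.res s v) := by
  obtain ⟨x, hx⟩ := Option.isSome_iff_exists.mp ((o.tnf v).mp hv)
  simp [Op.res, hx]

lemma ite_models_sub_ite_models_res {s : PState V D} (hs : o.applicable s)
    (w : ℝ) (f : PAssign V D) :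
    ((if Models s f then w else 0) - if Models (o.res s) f then w else 0) =
      if o.ModelsOutside s f then w * o.delta (restrictO o f) else 0 := by
  rw [models_iff_modelsOutside_and_pModels (fun _ => hs.pre_eq),
    models_iff_modelsOutside_and_pModels (fun _ => eff_eq_res_apply s), modelsOutside_res_iff]
  unfold delta
  split_ifs <;> simp_all

lemma restrictO_eq_self {f : PAssign V D} (hf : ∀ v, (f v).isSome → (o.pre v).isSome) :
    restrictO o f = f := by
  funext v
  by_cases hv : (o.pre v).isSome
  · simp [restrictO, hv]
  · simp only [restrictO, hv]
    exact (Option.not_isSome_iff_eq_none.mp (mt (hf v) hv)).symm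

lemma modelsOutside_of_forall_isSome {f : PAssign V D}
    (hf : ∀ v, (f v).isSome → (o.pre v).isSome) (s : PState V D) : o.ModelsOutside s f :=
  fun v hv _ hx => absurd (hf v (Option.isSome_of_mem hx)) hv

lemma delta_restrictO_eq_zero {f : PAssign V D}
    (hf : ¬ ∃ v, (o.pre v).isSome ∧ (f v).isSome) : o.delta (restrictO o f) = 0 := by
  have hnone : ∀ p : PAssign V D, PModels p (restrictO o f) := by
    intro p v x hx
    by_cases hv : (o.pre v).isSome
    · simp only [restrictO, hv, if_true] at hx
      exact absurd ⟨v, hv, Option.isSome_of_mem hx⟩ hf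
    · simp [restrictO, hv] at hx
  simp [delta, hnone]

lemma modelsOutside_iff_of_unique {f : PAssign V D} {u₀ : V} (hfu₀ : (f u₀).isSome)
    (hpu₀ : ¬ (o.pre u₀).isSome) (huniq : ∀ u, (f u).isSome → ¬ (o.pre u).isSome → u = u₀)
    (s : PState V D) : o.ModelsOutside s f ↔ f u₀ = some (s u₀) := by
  obtain ⟨x₀, hx₀⟩ := Option.isSome_iff_exists.mp hfu₀
  refine ⟨fun h => by rw [hx₀, h u₀ hpu₀ x₀ hx₀], fun h v hv x hx => ?_⟩
  obtain rfl := huniq v (Option.isSome_of_mem hx) hv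
  simp_all

variable (o) in
def withPre (t : PState V D) : PState V D :=
  fun v => (o.pre v).getD (t v)

lemma applicable_withPre (t : PState V D) : o.applicable (o.withPre t) := by
  intro v x hx
  simp [withPre, Option.mem_def.mp hx]

lemma withPre_apply_of_not_isSome_pre (t : PState V D) {v : V} (h : ¬ (o.pre v).isSome) :
    o.withPre t v = t v := by
  simp [withPre, Option.not_isSome_iff_eq_none.mp h]

section Fintype

variable [Fintype V]

lemma eq_of_card_isSome_le_two {f : PAssign V D}
    (hf : (Finset.univ.filter fun v => (f v).isSome).card ≤ 2) {u₀ v₀ : V}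
    (hfu₀ : (f u₀).isSome) (hfv₀ : (f v₀).isSome) (hpv₀ : (o.pre v₀).isSome)
    {u : V} (hfu : (f u).isSome) (hpu : ¬ (o.pre u).isSome) (hpu₀ : ¬ (o.pre u₀).isSome) :
    u = u₀ := by
  by_contra hne
  have : 2 < (Finset.univ.filter fun v => (f v).isSome).card :=
    Finset.two_lt_card.mpr ⟨u, by simpa using hfu, u₀, by simpa using hfu₀, v₀,
      by simpa using hfv₀, hne, fun h => hpu (h ▸ hpv₀), fun h => hpu₀ (h ▸ hpv₀)⟩
  omega

lemma ite_modelsOutside_eq_ite_add_sum {f : PAssign V D}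
    (hf : (Finset.univ.filter fun v => (f v).isSome).card ≤ 2) (s : PState V D) (w : ℝ) :
    (if o.ModelsOutside s f then w * o.delta (restrictO o f) else 0) =
      (if ∀ v, (f v).isSome → (o.pre v).isSome then w * o.delta f else 0) +
        ∑ u ∈ Finset.univ.filter (fun v => ¬ (o.pre v).isSome),
          if f u = some (s u) ∧ ∃ v, (o.pre v).isSome ∧ (f v).isSome then
            w * o.delta (restrictO o f) else 0 := by
  by_cases hin : ∀ v, (f v).isSome → (o.pre v).isSome
  · rw [if_pos (modelsOutside_of_forall_isSome hin s), if_pos hin, restrictO_eq_self hin,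
      Finset.sum_eq_zero, add_zero]
    intro u hu
    rw [if_neg]
    rintro ⟨hfu, -⟩
    exact (Finset.mem_filter.mp hu).2 (hin u (by simp [hfu]))
  rw [if_neg hin, zero_add]
  by_cases hmeet : ∃ v, (o.pre v).isSome ∧ (f v).isSome
  swap
  · simp [delta_restrictO_eq_zero hmeet, hmeet]
  push Not at hin
  obtain ⟨u₀, hfu₀, hpu₀⟩ := hin
  obtain ⟨v₀, hpv₀, hfv₀⟩ := hmeet
  have huniq : ∀ u, (f u).isSome → ¬ (o.pre u).isSome → u = u₀ := fun u hfu hpu =>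
    eq_of_card_isSome_le_two hf hfu₀ hfv₀ hpv₀ hfu hpu hpu₀
  rw [Finset.sum_eq_single_of_mem u₀ (by simpa using hpu₀),
    modelsOutside_iff_of_unique hfu₀ hpu₀ huniq s]
  · simp only [show ∃ v, (o.pre v).isSome ∧ (f v).isSome from ⟨v₀, hpv₀, hfv₀⟩, and_true]
    congr
  · intro u hu hne
    rw [if_neg]
    rintro ⟨hfu, -⟩
    exact hne (huniq u (by simp [hfu]) (Finset.mem_filter.mp hu).2)

theorem pot_sub_pot_res {F : Finset (PAssign V D)} (w : PAssign V D → ℝ)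
    (hsize : ∀ f ∈ F, (Finset.univ.filter fun v => (f v).isSome).card ≤ 2)
    {s : PState V D} (hs : o.applicable s) :
    pot F w s - pot F w (o.res s) =
      deltaInd o F w + ∑ u ∈ Finset.univ.filter (fun v => ¬ (o.pre v).isSome),
        innerSum o F w u (s u) := calc
  pot F w s - pot F w (o.res s)
      = ∑ f ∈ F, if o.ModelsOutside s f then w f * o.delta (restrictO o f) else 0 := by
    rw [pot, pot, ← Finset.sum_sub_distrib]
    exact Finset.sum_congr rfl fun f _ => ite_models_sub_ite_models_res hs (w f) f
  _ = ∑ f ∈ F, ((if ∀ v, (f v).isSome → (o.pre v).isSome then w f * o.delta f else 0) +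
        ∑ u ∈ Finset.univ.filter (fun v => ¬ (o.pre v).isSome),
          if f u = some (s u) ∧ ∃ v, (o.pre v).isSome ∧ (f v).isSome then
            w f * o.delta (restrictO o f) else 0) :=
    Finset.sum_congr rfl fun f hf => ite_modelsOutside_eq_ite_add_sum (hsize f hf) s (w f)
  _ = _ := by
    rw [Finset.sum_add_distrib, Finset.sum_comm]
    simp only [deltaInd, innerSum, Finset.sum_filter, delta]

end Fintype

end Op

theorem stmt6_general {V : Type} {D : V → Type} [Fintype V]
    [∀ v, Fintype (D v)] [∀ v, Nonempty (D v)]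
    (o : Op V D) (F : Finset (PAssign V D)) (w : PAssign V D → ℝ)
    (hsize : ∀ f ∈ F, (Finset.univ.filter fun v => (f v).isSome).card ≤ 2) :
    IsGreatest {y : ℝ | ∃ s : PState V D, o.applicable s ∧ y = pot F w s - pot F w (o.res s)}
      (deltaInd o F w +
        ∑ u ∈ Finset.univ.filter (fun v : V => ¬ (o.pre v).isSome),
          Finset.univ.sup' Finset.univ_nonempty (fun x : D u => innerSum o F w u x)) := by
  choose best _ hbest using fun u =>
    Finset.exists_mem_eq_sup' Finset.univ_nonempty (innerSum o F w u)
  refine ⟨⟨o.withPre best, Op.applicable_withPre best, ?_⟩, ?_⟩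
  · rw [Op.pot_sub_pot_res w hsize (Op.applicable_withPre best)]
    refine congrArg _ (Finset.sum_congr rfl fun u hu => ?_)
    rw [hbest, Op.withPre_apply_of_not_isSome_pre best (Finset.mem_filter.mp hu).2]
  · rintro y ⟨s, hs, rfl⟩
    rw [Op.pot_sub_pot_res w hsize hs]
    gcongr with u
    exact Finset.le_sup' _ (Finset.mem_univ (s u))

/-- For a potential heuristic over features of size at most 2, the maximum of
`φ(s) − φ(s⟦o⟧)` over the states in which `o` is applicable is attained and equals
`Δ_o^{ind} + Σ_{V ∉ vars(o)} max_{v ∈ dom(V)} Σ_{f = f_o ∧ (V,v)} w(f)·Δ_o(f_o)`. -/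
theorem stmt6 {V : Type} {D : V → Type} [Fintype V] [DecidableEq V]
    [∀ v, Fintype (D v)] [∀ v, DecidableEq (D v)] [∀ v, Nonempty (D v)]
    (o : Op V D) (F : Finset (PAssign V D)) (w : PAssign V D → ℝ)
    (hsize : ∀ f ∈ F, (Finset.univ.filter fun v => (f v).isSome).card ≤ 2) :
    IsGreatest {y : ℝ | ∃ s : PState V D, o.applicable s ∧ y = pot F w s - pot F w (o.res s)}
      (deltaInd o F w +
        ∑ u ∈ Finset.univ.filter (fun v : V => ¬ (o.pre v).isSome),
          Finset.univ.sup' Finset.univ_nonempty (fun x : D u => innerSum o F w u x)) :=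
  stmt6_general o F w hsize
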